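/- arXiv:2210.11037 — 4 statements merged into one kernel-verified Lean document; each statement's English description precedes it below -/
import Mathlib

section
/- Let a ≥ 2 and let H = H_1 ∪ H_2 be the disjoint union of two trees H_1 and H_2, each on 2a vertices and each having both bipartition classes of size exactly a. Then for every n ≥ 2a, f(n,H) ≥ binom(2a−1, 2) + (2a−1)(n−2a+1). -/
/-!
Fix a set `X` of `2a - 1` vertices and colour the edges between `X` and its complement red, all
others blue. There is no red copy of `H`: the red graph is bipartite with parts `X` and `Xᶜ`, and
since a connected graph has only one bipartition, each balanced tree puts exactly `a` of its
vertices into `X`, which has room for only `2a - 1`. In a blue copy of `H` each tree lies inside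
one of the blue cliques on `X` and `Xᶜ`, hence inside `Xᶜ`, as `X` is too small. So every edge
meeting `X` is NIM-`H`, and there are `C(2a-1, 2) + (2a-1)(n-2a+1)` of them.
-/

open SimpleGraph

/-- The edge `e` of `G` is contained in a copy of `H` inside `G`. -/
def EdgeInCopy {W V : Type*} (H : SimpleGraph W) (G : SimpleGraph V) (e : Sym2 V) : Prop :=
  ∃ f : H →g G, Function.Injective f ∧ ∃ e' ∈ H.edgeSet, e = e'.map f

/-- `G` contains a copy of `H` (a subgraph isomorphic to `H`). -/
def HasCopy {W V : Type*} (H : SimpleGraph W) (G : SimpleGraph V) : Prop :=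
  ∃ f : H →g G, Function.Injective f

/-- The Turán number `ex(n, H)`. -/
noncomputable def exNum {W : Type*} (n : ℕ) (H : SimpleGraph W) : ℕ :=
  sSup {m | ∃ G : SimpleGraph (Fin n), ¬ HasCopy H G ∧ m = G.edgeSet.ncard}

/-- The graph formed by the edges of color `i` of an edge-coloring `c` of `K_n`. -/
def colorGraph {n : ℕ} {κ : Type*} (c : Sym2 (Fin n) → κ) (i : κ) : SimpleGraph (Fin n) where
  Adj x y := x ≠ y ∧ c s(x, y) = i
  symm := ⟨fun x y => by
    rintro ⟨hxy, hc⟩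
    exact ⟨hxy.symm, by rwa [Sym2.eq_swap]⟩⟩
  loopless := ⟨fun x => by simp⟩

/-- The set of NIM-`H` edges of `K_n` under the `k`-edge-coloring `c`. -/
def nimEdges {W : Type*} (n k : ℕ) (H : SimpleGraph W) (c : Sym2 (Fin n) → Fin k) :
    Set (Sym2 (Fin n)) :=
  {e | e ∈ (⊤ : SimpleGraph (Fin n)).edgeSet ∧ ∀ i : Fin k, ¬ EdgeInCopy H (colorGraph c i) e}

/-- `f_k(n, H)`: the maximum number of NIM-`H` edges over all `k`-edge-colorings of `K_n`. -/
noncomputable def nimNum {W : Type*} (k n : ℕ) (H : SimpleGraph W) : ℕ :=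
  sSup {m | ∃ c : Sym2 (Fin n) → Fin k, m = (nimEdges n k H c).ncard}

open Finset

namespace SimpleGraph

variable {V W : Type*} {G : SimpleGraph V} {K : SimpleGraph W}

theorem Preconnected.iff_of_forall_adj (hG : G.Preconnected) {P : V → Prop}
    (hP : ∀ u v, G.Adj u v → (P u ↔ P v)) (u v : V) : P u ↔ P v := by
  obtain ⟨w⟩ := hG u v
  induction w with
  | nil => rfl
  | cons h _ ih => exact (hP _ _ h).trans ih

theorem Preconnected.card_filter_eq_of_adj_iff_not [Fintype V] (hG : G.Preconnected)
    {A : Finset V} (hA : ∀ u v, G.Adj u v → (u ∈ A ↔ v ∉ A)) (hbal : 2 * #A = Fintype.card V)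
    (P : V → Prop) [DecidablePred P] (hP : ∀ u v, G.Adj u v → (P u ↔ ¬ P v)) :
    #{v | P v} = #A := by
  classical
  cases isEmpty_or_nonempty V with
  | inl _ => simp only [Finset.eq_empty_of_isEmpty, card_empty]
  | inr hV =>
    obtain ⟨v₀⟩ := hV
    have hconst := hG.iff_of_forall_adj (P := fun v => v ∈ A ↔ P v)
      (fun u v huv => by have := hA u v huv; have := hP u v huv; tauto) v₀
    by_cases h₀ : v₀ ∈ A ↔ P v₀
    · congr 1
      ext v
      have := hconst v
      simp only [mem_filter, mem_univ, true_and]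
      tauto
    · have hcompl : ({v | P v} : Finset V) = Aᶜ := by
        ext v
        have := hconst v
        simp only [mem_filter, mem_univ, true_and, mem_compl]
        tauto
      rw [hcompl, card_compl]
      omega

theorem Preconnected.map_notMem_of_card_lt [Fintype V] [DecidableEq W] (hG : G.Preconnected)
    {X : Finset W} (hK : ∀ x y, K.Adj x y → (x ∈ X ↔ y ∈ X)) (f : G →g K)
    (hf : Function.Injective f) (hX : #X < Fintype.card V) (v : V) : f v ∉ X := by
  intro hv
  have hall : ∀ u, f u ∈ X := fun u =>
    (hG.iff_of_forall_adj (P := fun u => f u ∈ X) (fun _ _ h => hK _ _ (f.map_adj h)) u v).mpr hv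
  have := card_le_card_of_injOn (s := univ) f (fun u _ => hall u) hf.injOn
  simp only [card_univ] at this
  omega

end SimpleGraph

theorem not_hasCopy_sum_of_adj_iff_not {V₁ V₂ W : Type*} [Fintype V₁] [Fintype V₂]
    [DecidableEq W] {H₁ : SimpleGraph V₁} {H₂ : SimpleGraph V₂} {G : SimpleGraph W}
    {X : Finset W} (hG : ∀ x y, G.Adj x y → (x ∈ X ↔ y ∉ X))
    (h₁ : H₁.Preconnected) (h₂ : H₂.Preconnected) {A₁ : Finset V₁} {A₂ : Finset V₂}
    (hA₁ : ∀ u v, H₁.Adj u v → (u ∈ A₁ ↔ v ∉ A₁)) (hA₂ : ∀ u v, H₂.Adj u v → (u ∈ A₂ ↔ v ∉ A₂))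
    (hbal₁ : 2 * #A₁ = Fintype.card V₁) (hbal₂ : 2 * #A₂ = Fintype.card V₂)
    (hX : #X < #A₁ + #A₂) : ¬ HasCopy (H₁ ⊕g H₂) G := by
  rintro ⟨f, hf⟩
  have hcard : #{w | f w ∈ X} = #A₁ + #A₂ := by
    rw [card_filter, Fintype.sum_sum_type, ← card_filter, ← card_filter,
      h₁.card_filter_eq_of_adj_iff_not hA₁ hbal₁ _
        fun u v h => hG _ _ (f.map_adj (sum_adj_inl.mpr h)),
      h₂.card_filter_eq_of_adj_iff_not hA₂ hbal₂ _
        fun u v h => hG _ _ (f.map_adj (sum_adj_inr.mpr h))]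
  have := card_le_card_of_injOn (s := {w | f w ∈ X}) f (fun w hw => (mem_filter.mp hw).2)
    hf.injOn
  omega

theorem forall_sum_map_notMem {V₁ V₂ W : Type*} [Fintype V₁] [Fintype V₂] [DecidableEq W]
    {H₁ : SimpleGraph V₁} {H₂ : SimpleGraph V₂} {G : SimpleGraph W} {X : Finset W}
    (hG : ∀ x y, G.Adj x y → (x ∈ X ↔ y ∈ X)) (h₁ : H₁.Preconnected) (h₂ : H₂.Preconnected)
    (hX₁ : #X < Fintype.card V₁) (hX₂ : #X < Fintype.card V₂)
    (f : H₁ ⊕g H₂ →g G) (hf : Function.Injective f) : ∀ w, f w ∉ X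
  | .inl v => h₁.map_notMem_of_card_lt hG (f.comp Embedding.sumInl.toHom)
      (hf.comp Sum.inl_injective) hX₁ v
  | .inr v => h₂.map_notMem_of_card_lt hG (f.comp Embedding.sumInr.toHom)
      (hf.comp Sum.inr_injective) hX₂ v

/-- The complete split graph on `X`: a clique on `X` joined to an independent set on `Xᶜ`. -/
def completeSplitGraph {W : Type*} (X : Finset W) : SimpleGraph W :=
  SimpleGraph.fromRel fun x _ => x ∈ X

theorem completeSplitGraph_adj {W : Type*} {X : Finset W} {x y : W} :
    (completeSplitGraph X).Adj x y ↔ x ≠ y ∧ (x ∈ X ∨ y ∈ X) :=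
  Iff.rfl

instance {W : Type*} [DecidableEq W] (X : Finset W) : DecidableRel (completeSplitGraph X).Adj :=
  fun _ _ => decidable_of_iff' _ completeSplitGraph_adj

theorem two_mul_choose_two_add_mul_sub {k N : ℕ} (h : k ≤ N) :
    2 * (k.choose 2 + k * (N - k)) = k * (N - 1) + (N - k) * k := by
  obtain ⟨m, rfl⟩ := Nat.exists_eq_add_of_le h
  rw [mul_add, Nat.choose_two_right, Nat.two_mul_div_two_of_even (Nat.even_mul_pred_self k)]
  rcases k with _ | k
  · simp
  · simp only [Nat.add_sub_cancel_left, Nat.add_sub_cancel]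
    rw [show k + 1 + m - 1 = k + m by omega]
    ring

theorem degree_completeSplitGraph {W : Type*} [Fintype W] [DecidableEq W] (X : Finset W)
    (x : W) :
    (completeSplitGraph X).degree x = if x ∈ X then Fintype.card W - 1 else #X := by
  rw [← card_neighborFinset_eq_degree]
  split_ifs with hx
  · rw [← card_univ, ← card_erase_of_mem (mem_univ x)]
    congr 1
    ext y
    simp [completeSplitGraph_adj, hx, eq_comm]
  · congr 1
    ext y
    simp only [mem_neighborFinset, completeSplitGraph_adj, hx, false_or]
    exact ⟨And.right, fun hy => ⟨fun h => hx (h ▸ hy), hy⟩⟩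

theorem ncard_edgeSet_completeSplitGraph {W : Type*} [Fintype W] [DecidableEq W]
    (X : Finset W) :
    (completeSplitGraph X).edgeSet.ncard = (#X).choose 2 + #X * (Fintype.card W - #X) := by
  have hsum := (completeSplitGraph X).sum_degrees_eq_twice_card_edges
  simp only [degree_completeSplitGraph] at hsum
  rw [sum_ite, sum_const, sum_const, filter_not, filter_univ_mem,
    card_sdiff_of_subset (subset_univ _), card_univ, smul_eq_mul, smul_eq_mul] at hsum
  rw [← coe_edgeFinset, Set.ncard_coe_finset]
  have := two_mul_choose_two_add_mul_sub (card_le_univ X)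
  omega

/-- The paper's colouring: red (`0`) between `X` and `Xᶜ`, blue (`1`) inside `X` and inside `Xᶜ`. -/
def splitColoring {n : ℕ} (X : Finset (Fin n)) : Sym2 (Fin n) → Fin 2 :=
  Sym2.lift ⟨fun x y => if (x ∈ X ↔ y ∈ X) then 1 else 0, fun x y => by simp only [Iff.comm]⟩

theorem colorGraph_splitColoring_zero_adj {n : ℕ} {X : Finset (Fin n)} {x y : Fin n}
    (h : (colorGraph (splitColoring X) 0).Adj x y) : x ∈ X ↔ y ∉ X := by
  have := h.2
  simp only [splitColoring, Sym2.lift_mk] at this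
  split_ifs at this <;> tauto

theorem colorGraph_splitColoring_one_adj {n : ℕ} {X : Finset (Fin n)} {x y : Fin n}
    (h : (colorGraph (splitColoring X) 1).Adj x y) : x ∈ X ↔ y ∈ X := by
  have := h.2
  simp only [splitColoring, Sym2.lift_mk] at this
  split_ifs at this <;> tauto

theorem edgeSet_completeSplitGraph_subset_nimEdges {W : Type*} {n k : ℕ} {H : SimpleGraph W}
    {c : Sym2 (Fin n) → Fin k} {X : Finset (Fin n)}
    (hX : ∀ i (f : H →g colorGraph c i), Function.Injective f → ∀ w, f w ∉ X) :
    (completeSplitGraph X).edgeSet ⊆ nimEdges n k H c := by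
  intro e he
  induction e using Sym2.ind with
  | _ x y =>
    obtain ⟨hxy, hxX⟩ := completeSplitGraph_adj.mp he
    refine ⟨hxy, fun i ⟨f, hf, e', _, he'⟩ => ?_⟩
    have hmem : ∀ z ∈ s(x, y), z ∉ X := fun z hz => by
      rw [he', Sym2.mem_map] at hz
      obtain ⟨w, -, rfl⟩ := hz
      exact hX i f hf w
    rcases hxX with hx | hy
    · exact hmem x (Sym2.mem_mk_left x y) hx
    · exact hmem y (Sym2.mem_mk_right x y) hy

theorem ncard_nimEdges_le_nimNum {W : Type*} {n k : ℕ} (H : SimpleGraph W)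
    (c : Sym2 (Fin n) → Fin k) : (nimEdges n k H c).ncard ≤ nimNum k n H :=
  le_csSup ⟨Nat.card (Sym2 (Fin n)), by
    rintro m ⟨c', rfl⟩
    exact Set.ncard_le_card _⟩ ⟨c, rfl⟩

theorem nim_lower_bound_balanced_trees_general {V₁ V₂ : Type*} [Fintype V₁] [Fintype V₂]
    (a : ℕ)
    (H₁ : SimpleGraph V₁) (H₂ : SimpleGraph V₂)
    (h₁tree : H₁.IsTree) (h₂tree : H₂.IsTree)
    (h₁card : Fintype.card V₁ = 2 * a) (h₂card : Fintype.card V₂ = 2 * a)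
    (h₁bal : ∃ A : Finset V₁, A.card = a ∧ ∀ u v, H₁.Adj u v → (u ∈ A ↔ v ∉ A))
    (h₂bal : ∃ A : Finset V₂, A.card = a ∧ ∀ u v, H₂.Adj u v → (u ∈ A ↔ v ∉ A))
    (n : ℕ) (hn : 2 * a ≤ n) :
    (2 * a - 1).choose 2 + (2 * a - 1) * (n - 2 * a + 1) ≤ nimNum 2 n (H₁.sum H₂) := by
  obtain ⟨A₁, hA₁, h₁bip⟩ := h₁bal
  obtain ⟨A₂, hA₂, h₂bip⟩ := h₂bal
  have ha : 0 < a := by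
    have := h₁tree.connected.nonempty
    have := Fintype.card_pos (α := V₁)
    omega
  obtain ⟨X, -, hX⟩ := exists_subset_card_eq (s := (univ : Finset (Fin n))) (n := 2 * a - 1)
    (by simp only [card_univ, Fintype.card_fin]; omega)
  have hnim : (completeSplitGraph X).edgeSet ⊆ nimEdges n 2 (H₁ ⊕g H₂) (splitColoring X) := by
    refine edgeSet_completeSplitGraph_subset_nimEdges fun i f hf => ?_
    fin_cases i
    · exact (not_hasCopy_sum_of_adj_iff_not (fun _ _ => colorGraph_splitColoring_zero_adj)
        h₁tree.connected.preconnected h₂tree.connected.preconnected h₁bip h₂bip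
        (by omega) (by omega) (by omega) ⟨f, hf⟩).elim
    · exact forall_sum_map_notMem (fun _ _ => colorGraph_splitColoring_one_adj)
        h₁tree.connected.preconnected h₂tree.connected.preconnected
        (by omega) (by omega) f hf
  calc (2 * a - 1).choose 2 + (2 * a - 1) * (n - 2 * a + 1)
      = (completeSplitGraph X).edgeSet.ncard := by
        rw [ncard_edgeSet_completeSplitGraph, hX, Fintype.card_fin]
        congr 2
        omega
    _ ≤ (nimEdges n 2 (H₁ ⊕g H₂) (splitColoring X)).ncard := Set.ncard_le_ncard hnim
    _ ≤ nimNum 2 n (H₁.sum H₂) := ncard_nimEdges_le_nimNum _ _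

/-- Let `a ≥ 2` and let `H = H₁ ∪ H₂` be the disjoint union of two trees, each on `2a`
vertices and each having both bipartition classes of size exactly `a`. Then for every
`n ≥ 2a`, `f(n, H) ≥ (2a-1).choose 2 + (2a-1)(n-2a+1)`. -/
theorem nim_lower_bound_balanced_trees {V₁ V₂ : Type*} [Fintype V₁] [Fintype V₂]
    (a : ℕ) (ha : 2 ≤ a)
    (H₁ : SimpleGraph V₁) (H₂ : SimpleGraph V₂)
    (h₁tree : H₁.IsTree) (h₂tree : H₂.IsTree)
    (h₁card : Fintype.card V₁ = 2 * a) (h₂card : Fintype.card V₂ = 2 * a)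
    (h₁bal : ∃ A : Finset V₁, A.card = a ∧ ∀ u v, H₁.Adj u v → (u ∈ A ↔ v ∉ A))
    (h₂bal : ∃ A : Finset V₂, A.card = a ∧ ∀ u v, H₂.Adj u v → (u ∈ A ↔ v ∉ A))
    (n : ℕ) (hn : 2 * a ≤ n) :
    (2 * a - 1).choose 2 + (2 * a - 1) * (n - 2 * a + 1) ≤ nimNum 2 n (H₁.sum H₂) :=
  nim_lower_bound_balanced_trees_general a H₁ H₂ h₁tree h₂tree h₁card h₂card h₁bal h₂bal n hn
end

section
/- Let ℓ ≥ 4 and let n_1, n_2, c be nonnegative integers with c ≤ n_1. Then ex(n_1, P_ℓ) + ex(n_2, P_ℓ) < ex(n_1 − c, P_ℓ) + ex(n_2 + c + ℓ, P_ℓ). -/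
open SimpleGraph

/-!
Upper bound (Erdős–Gallai): a `P_ℓ`-free graph on `n` vertices has at most `(ℓ - 2)n/2` edges.
By induction on the number of edges it suffices to find a nonempty set `S` of non-isolated vertices
meeting at most `(ℓ - 2)|S|/2` edges. If some non-isolated vertex has degree at most `(ℓ - 2)/2`,
take it alone. Otherwise take a longest path: the neighbours of its ends all lie on it and the two
end degrees add up to at least its number of vertices, so by pigeonhole the path closes into a cycle
on the same vertices. Maximality then forbids edges leaving the path, so its `k ≤ ℓ - 1` vertices
meet at most `k(k - 1)/2` edges.

Lower bound: disjoint cliques on blocks of `ℓ - 1` consecutive vertices give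
`2 ex(n, P_ℓ) ≥ (ℓ - 2)n - b(ℓ - 1 - b) ≥ (ℓ - 2)n - (ℓ - 1)²/4` with `b = n mod (ℓ - 1)`.
Moving `c` vertices and adding `ℓ` more raises the main term `(ℓ - 2)n/2` by `(ℓ - 2)ℓ/2`, which
exceeds the total error `(ℓ - 1)²/4` of the two lower bounds.
-/

open Finset

theorem HasCopy.mono {W V : Type*} {H : SimpleGraph W} {G G' : SimpleGraph V} (hle : G ≤ G')
    (h : HasCopy H G) : HasCopy H G' :=
  let ⟨f, hf⟩ := h
  ⟨(Hom.ofLE hle).comp f, hf⟩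

theorem Fin.card_filter_val_div_eq {m d : ℕ} (hd : 0 < d) (k : ℕ) :
    #{x : Fin m | x.val / d = k} = min (k * d + d) m - k * d := by
  rw [← Nat.card_Ico, ← card_map Fin.valEmbedding]
  congr 1
  ext y
  simp only [mem_map, mem_filter, mem_univ, true_and, Fin.valEmbedding_apply, mem_Ico,
    lt_min_iff, Nat.div_eq_iff hd]
  constructor
  · rintro ⟨x, hx, rfl⟩
    omega
  · rintro ⟨h1, h2, h3⟩
    exact ⟨⟨y, h3⟩, by simp only; omega, rfl⟩

theorem Fin.card_filter_val_div_eq_of_lt {m d k : ℕ} (hd : 0 < d) (hk : k < m / d) :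
    #{x : Fin m | x.val / d = k} = d := by
  have : (k + 1) * d ≤ m := (Nat.le_div_iff_mul_le hd).1 hk
  rw [Fin.card_filter_val_div_eq hd, min_eq_left (by linarith)]
  omega

theorem Fin.card_filter_val_div_eq_div (m : ℕ) {d : ℕ} (hd : 0 < d) :
    #{x : Fin m | x.val / d = m / d} = m % d := by
  have := Nat.div_add_mod' m d
  have := Nat.mod_lt m hd
  rw [Fin.card_filter_val_div_eq hd, min_eq_right (by linarith)]
  omega

namespace SimpleGraph

variable {V : Type*} {G : SimpleGraph V}

theorem hasCopy_pathGraph_of_isChain {ℓ : ℕ} {l : List V} (hnd : l.Nodup)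
    (hc : l.IsChain G.Adj) (hℓ : ℓ ≤ l.length) : HasCopy (pathGraph ℓ) G := by
  rw [List.isChain_iff_getElem] at hc
  refine ⟨⟨fun i => l[i.val], fun {i j} hij => ?_⟩, fun i j hij => Fin.ext ?_⟩
  · rcases pathGraph_adj.1 hij with h | h
    · simpa only [← h] using hc i (by omega)
    · simpa only [← h] using (hc j (by omega)).symm
  · exact (hnd.getElem_inj_iff).1 hij

theorem length_lt_of_not_hasCopy_pathGraph {ℓ : ℕ} (h : ¬ HasCopy (pathGraph ℓ) G)
    {l : List V} (hnd : l.Nodup) (hc : l.IsChain G.Adj) : l.length < ℓ :=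
  lt_of_not_ge fun hℓ => h (hasCopy_pathGraph_of_isChain hnd hc hℓ)

theorem exists_adj_of_mem_of_isChain :
    ∀ {l : List V}, l.IsChain G.Adj → 2 ≤ l.length → ∀ z ∈ l, ∃ w, G.Adj z w
  | a :: b :: t, hc, _, z, hz => by
    rw [List.isChain_cons_cons] at hc
    rcases List.mem_cons.1 hz with rfl | hz
    · exact ⟨b, hc.1⟩
    cases t with
    | nil => exact ⟨a, by simp_all [G.adj_comm]⟩
    | cons c t => exact exists_adj_of_mem_of_isChain hc.2 (by simp) z hz

theorem exists_longest_path {ℓ : ℕ}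
    (hbound : ∀ l : List V, l.Nodup → l.IsChain G.Adj → l.length < ℓ)
    {l₀ : List V} (hnd₀ : l₀.Nodup) (hc₀ : l₀.IsChain G.Adj) :
    ∃ l : List V, l.Nodup ∧ l.IsChain G.Adj ∧ l₀.length ≤ l.length ∧
      ∀ l' : List V, l'.Nodup → l'.IsChain G.Adj → l'.length ≤ l.length := by
  classical
  let P k := ∃ l : List V, l.Nodup ∧ l.IsChain G.Adj ∧ l.length = k
  obtain ⟨l, hnd, hc, hlen⟩ : P (Nat.findGreatest P ℓ) :=
    Nat.findGreatest_spec (hbound l₀ hnd₀ hc₀).le ⟨l₀, hnd₀, hc₀, rfl⟩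
  refine ⟨l, hnd, hc, ?_, fun l' hnd' hc' => ?_⟩ <;> rw [hlen]
  · exact Nat.le_findGreatest (hbound l₀ hnd₀ hc₀).le ⟨l₀, hnd₀, hc₀, rfl⟩
  · exact Nat.le_findGreatest (hbound l' hnd' hc').le ⟨l', hnd', hc', rfl⟩

theorem mem_of_adj_of_head?_eq {l : List V} (hnd : l.Nodup) (hc : l.IsChain G.Adj)
    (hmax : ∀ l' : List V, l'.Nodup → l'.IsChain G.Adj → l'.length ≤ l.length)
    {x w : V} (hx : l.head? = some x) (hxw : G.Adj x w) : w ∈ l := by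
  by_contra hw
  have hchain : (w :: l).IsChain G.Adj :=
    List.isChain_cons.2 ⟨fun y hy => by simp_all [G.adj_comm], hc⟩
  simpa using hmax _ (List.nodup_cons.2 ⟨hw, hnd⟩) hchain

theorem mem_of_adj_of_getLast?_eq {l : List V} (hnd : l.Nodup) (hc : l.IsChain G.Adj)
    (hmax : ∀ l' : List V, l'.Nodup → l'.IsChain G.Adj → l'.length ≤ l.length)
    {y w : V} (hy : l.getLast? = some y) (hyw : G.Adj y w) : w ∈ l := by
  have hrev : l.reverse.IsChain G.Adj :=
    List.isChain_reverse.2 (hc.imp fun _ _ h => h.symm)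
  simpa using mem_of_adj_of_head?_eq (List.nodup_reverse.2 hnd) hrev (by simpa using hmax)
    (by simpa using hy) hyw

/-- `(c ++ c).IsChain G.Adj` encodes that `c` is a cycle: every rotation of `c` is an infix. -/
theorem isChain_append_self_of_cross {a b : List V} (ha : a ≠ []) (hb : b ≠ [])
    (hab : (a ++ b).IsChain G.Adj)
    (hhead : ∀ x ∈ a.head?, ∀ u ∈ b.head?, G.Adj x u)
    (hlast : ∀ v ∈ a.getLast?, ∀ y ∈ b.getLast?, G.Adj v y) :
    ((a ++ b.reverse) ++ (a ++ b.reverse)).IsChain G.Adj := by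
  obtain ⟨hca, hcb, -⟩ := List.isChain_append.1 hab
  have hc : (a ++ b.reverse).IsChain G.Adj :=
    List.isChain_append.2 ⟨hca, List.isChain_reverse.2 (hcb.imp fun _ _ h => h.symm),
      by simpa only [List.head?_reverse] using hlast⟩
  refine List.isChain_append.2 ⟨hc, hc, fun u hu x hx => (hhead x ?_ u ?_).symm⟩
  · simpa [List.head?_append, List.head?_eq_none_iff.not.2 ha] using hx
  · simpa [List.getLast?_append, hb] using hu

theorem mem_of_adj_of_isChain_append_self {c : List V} (hnd : c.Nodup)
    (hc : (c ++ c).IsChain G.Adj)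
    (hmax : ∀ l' : List V, l'.Nodup → l'.IsChain G.Adj → l'.length ≤ c.length)
    {z w : V} (hz : z ∈ c) (hzw : G.Adj z w) : w ∈ c := by
  by_contra hw
  obtain ⟨a, b, rfl⟩ := List.append_of_mem hz
  have hperm : (z :: (b ++ a)).Perm (a ++ z :: b) := by
    simpa using (List.perm_append_comm (l₁ := a) (l₂ := z :: b)).symm
  have hrot : (z :: (b ++ a)).IsChain G.Adj :=
    hc.infix ⟨a, z :: b, by simp⟩
  have hchain : (w :: z :: (b ++ a)).IsChain G.Adj := hrot.cons_cons hzw.symm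
  have hnd' : (w :: z :: (b ++ a)).Nodup :=
    List.nodup_cons.2 ⟨fun h => hw (hperm.mem_iff.1 h), hperm.nodup_iff.2 hnd⟩
  have := hmax _ hnd' hchain
  simp only [List.length_cons, List.length_append] at this
  omega

/-- Pigeonhole: `{i | G.Adj x l[i]}` and `{i | G.Adj y l[i - 1]}` both lie in `[1, l.length)`. -/
theorem exists_cross_of_length_le_degree_add_degree [G.LocallyFinite] {l : List V}
    {x y : V} (hx : l.head? = some x) (hy : l.getLast? = some y)
    (hxl : ∀ w, G.Adj x w → w ∈ l) (hyl : ∀ w, G.Adj y w → w ∈ l)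
    (hdeg : l.length ≤ G.degree x + G.degree y) :
    ∃ i u v, 0 < i ∧ l[i]? = some u ∧ l[i - 1]? = some v ∧ G.Adj x u ∧ G.Adj y v := by
  classical
  have hidx : ∀ w ∈ l, l[l.idxOf w]? = some w := fun w hw => List.getElem?_idxOf hw
  have hidx_lt : ∀ w ∈ l, l.idxOf w < l.length := fun w hw => List.idxOf_lt_length_iff.2 hw
  have hinj : ∀ z, (∀ w, G.Adj z w → w ∈ l) → Set.InjOn l.idxOf (G.neighborFinset z) :=
    fun z hz w hw w' _ h => (List.idxOf_inj (hz w (by simpa using hw))).1 h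
  let A := (G.neighborFinset x).image l.idxOf
  let B := (G.neighborFinset y).image (l.idxOf · + 1)
  have hA : A ⊆ Ico 1 l.length := by
    simp only [A, subset_iff, mem_image, mem_neighborFinset, mem_Ico]
    rintro _ ⟨w, hxw, rfl⟩
    refine ⟨Nat.one_le_iff_ne_zero.2 fun h0 => hxw.ne ?_, hidx_lt w (hxl w hxw)⟩
    simpa [← List.head?_eq_getElem?, h0, hx] using hidx w (hxl w hxw)
  have hB : B ⊆ Ico 1 l.length := by
    simp only [B, subset_iff, mem_image, mem_neighborFinset, mem_Ico]
    rintro _ ⟨w, hyw, rfl⟩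
    refine ⟨by omega, lt_of_le_of_ne (hidx_lt w (hyl w hyw)) fun h => hyw.ne ?_⟩
    have := hidx w (hyl w hyw)
    rw [show l.idxOf w = l.length - 1 by omega, ← List.getLast?_eq_getElem?, hy] at this
    simpa using this
  have hcardA : #A = G.degree x := card_image_of_injOn (hinj x hxl)
  have hcardB : #B = G.degree y :=
    card_image_of_injOn fun w hw w' hw' h => hinj y hyl hw hw' (by simpa using h)
  have hlen : 0 < l.length := List.length_pos_iff.2 (by rintro rfl; simp at hx)
  obtain ⟨i, hi⟩ := inter_nonempty_of_card_lt_card_add_card hA hB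
    (by rw [Nat.card_Ico, hcardA, hcardB]; omega)
  simp only [A, B, mem_inter, mem_image, mem_neighborFinset] at hi
  obtain ⟨hiA, hiB⟩ := hi
  obtain ⟨u, hxu, rfl⟩ := hiA
  obtain ⟨v, hyv, hvu⟩ := hiB
  refine ⟨_, u, v, Nat.pos_of_ne_zero fun h => ?_, hidx u (hxl u hxu), ?_, hxu, hyv⟩
  · omega
  · simpa [← hvu] using hidx v (hyl v hyv)

theorem mem_of_adj_of_longest [G.LocallyFinite] {l : List V} (hnd : l.Nodup)
    (hc : l.IsChain G.Adj)
    (hmax : ∀ l' : List V, l'.Nodup → l'.IsChain G.Adj → l'.length ≤ l.length)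
    {x y : V} (hx : l.head? = some x) (hy : l.getLast? = some y)
    (hdeg : l.length ≤ G.degree x + G.degree y) {z w : V} (hz : z ∈ l) (hzw : G.Adj z w) :
    w ∈ l := by
  obtain ⟨i, u, v, hi, hu, hv, hxu, hyv⟩ := exists_cross_of_length_le_degree_add_degree hx hy
    (fun _ => mem_of_adj_of_head?_eq hnd hc hmax hx)
    (fun _ => mem_of_adj_of_getLast?_eq hnd hc hmax hy) hdeg
  have hil : i < l.length := (List.getElem?_eq_some_iff.1 hu).1
  have hperm : (l.take i ++ (l.drop i).reverse).Perm l :=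
    ((List.reverse_perm _).append_left _).trans (by rw [List.take_append_drop])
  have hcyc := isChain_append_self_of_cross (a := l.take i) (b := l.drop i)
    (by simp [hi.ne', List.ne_nil_of_length_pos (hi.trans hil)]) (by simpa using hil)
    (by rwa [List.take_append_drop])
    (by simp [List.head?_take, hi.ne', hx, List.head?_drop, hu, hxu])
    (by simp [List.getLast?_take, hi.ne', hv, List.getLast?_drop, hil, hy, hyv.symm])
  exact hperm.mem_iff.1 (mem_of_adj_of_isChain_append_self (hperm.nodup_iff.2 hnd) hcyc
    (by rwa [hperm.length_eq]) (hperm.mem_iff.2 hz) hzw)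

section Counting

variable [Fintype V] [DecidableEq V] [DecidableRel G.Adj]

def edgesMeeting (G : SimpleGraph V) [DecidableRel G.Adj] (S : Finset V) : Finset (Sym2 V) :=
  {e ∈ G.edgeFinset | ∃ v ∈ S, v ∈ e}

theorem edgesMeeting_subset (S : Finset V) : G.edgesMeeting S ⊆ G.edgeFinset :=
  filter_subset _ _

theorem card_edgesMeeting_singleton (v : V) : #(G.edgesMeeting {v}) = G.degree v := by
  rw [← card_incidenceFinset_eq_degree]
  congr 1
  ext e
  simp [edgesMeeting, incidenceSet, and_comm]

theorem two_mul_card_edgesMeeting_le_of_forall_adj_mem {S : Finset V}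
    (hS : ∀ v ∈ S, ∀ w, G.Adj v w → w ∈ S) : 2 * #(G.edgesMeeting S) ≤ #S * (#S - 1) := by
  have hsub : G.edgesMeeting S ⊆ S.offDiag.image (Function.uncurry Sym2.mk) := by
    intro e
    induction e using Sym2.ind with
    | _ a b =>
      simp only [edgesMeeting, mem_filter, mem_edgeFinset, mem_edgeSet, Sym2.mem_iff, mem_image,
        mem_offDiag]
      rintro ⟨hab, v, hv, rfl | rfl⟩
      · exact ⟨(v, b), ⟨hv, hS v hv b hab, hab.ne⟩, rfl⟩
      · exact ⟨(a, v), ⟨hS v hv a hab.symm, hv, hab.ne⟩, rfl⟩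
  calc 2 * #(G.edgesMeeting S) ≤ 2 * #(S.offDiag.image (Function.uncurry Sym2.mk)) :=
        Nat.mul_le_mul_left 2 (card_le_card hsub)
    _ = #S * (#S - 1) := by rw [Sym2.two_mul_card_image_offDiag, offDiag_card, Nat.mul_sub_one]

theorem exists_two_mul_card_edgesMeeting_le {ℓ : ℕ} (h : ¬ HasCopy (pathGraph ℓ) G)
    (hne : G.edgeFinset.Nonempty) :
    ∃ S : Finset V, S.Nonempty ∧ (∀ v ∈ S, 0 < G.degree v) ∧
      2 * #(G.edgesMeeting S) ≤ (ℓ - 2) * #S := by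
  by_cases hsmall : ∃ v, 0 < G.degree v ∧ 2 * G.degree v ≤ ℓ - 2
  · obtain ⟨v, hv, hvℓ⟩ := hsmall
    exact ⟨{v}, singleton_nonempty v, by simpa using hv,
      by rwa [card_edgesMeeting_singleton, card_singleton, mul_one]⟩
  push Not at hsmall
  obtain ⟨⟨a, b⟩, he⟩ := hne
  have hab : G.Adj a b := by simpa using he
  obtain ⟨l, hnd, hc, hlen, hmax⟩ :=
    exists_longest_path (fun _ => length_lt_of_not_hasCopy_pathGraph h)
      (l₀ := [a, b]) (by simp [hab.ne]) (by simp [hab])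
  have hlenℓ := length_lt_of_not_hasCopy_pathGraph h hnd hc
  have hpos : ∀ z ∈ l, 0 < G.degree z := fun z hz =>
    (G.degree_pos_iff_exists_adj z).2 (exists_adj_of_mem_of_isChain hc hlen z hz)
  have hl : l ≠ [] := List.ne_nil_of_length_pos (by simp at hlen; omega)
  have hdeg : l.length ≤ G.degree (l.head hl) + G.degree (l.getLast hl) := by
    have := hsmall _ (hpos _ (List.head_mem hl))
    have := hsmall _ (hpos _ (List.getLast_mem hl))
    omega
  have hclosed : ∀ v ∈ l.toFinset, ∀ w, G.Adj v w → w ∈ l.toFinset := fun v hv w hvw => by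
    simpa using mem_of_adj_of_longest hnd hc hmax (List.head?_eq_some_head hl)
      (List.getLast?_eq_some_getLast hl) hdeg (List.mem_toFinset.1 hv) hvw
  refine ⟨l.toFinset, ⟨_, List.mem_toFinset.2 (List.head_mem hl)⟩,
    fun v hv => hpos v (List.mem_toFinset.1 hv), ?_⟩
  calc 2 * #(G.edgesMeeting l.toFinset) ≤ #l.toFinset * (#l.toFinset - 1) :=
        two_mul_card_edgesMeeting_le_of_forall_adj_mem hclosed
    _ ≤ (ℓ - 2) * #l.toFinset := by
      rw [List.toFinset_card_of_nodup hnd, mul_comm]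
      exact Nat.mul_le_mul_right _ (by omega)

theorem card_edgeFinset_deleteEdges_edgesMeeting (S : Finset V)
    [DecidableRel (G.deleteEdges (G.edgesMeeting S)).Adj] :
    #(G.deleteEdges (G.edgesMeeting S)).edgeFinset = #G.edgeFinset - #(G.edgesMeeting S) := by
  rw [edgeFinset_deleteEdges, card_sdiff_of_subset (edgesMeeting_subset S)]

theorem card_filter_degree_pos_deleteEdges_edgesMeeting_add_card_le {S : Finset V}
    (hS : ∀ v ∈ S, 0 < G.degree v) [DecidableRel (G.deleteEdges (G.edgesMeeting S)).Adj] :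
    #{v | 0 < (G.deleteEdges (G.edgesMeeting S)).degree v} + #S ≤ #{v | 0 < G.degree v} := by
  have hSsub : S ⊆ ({v | 0 < G.degree v} : Finset V) := fun v hv => by simpa using hS v hv
  have hsub : ({v | 0 < (G.deleteEdges (G.edgesMeeting S)).degree v} : Finset V) ⊆
      ({v | 0 < G.degree v} : Finset V) \ S := by
    intro u hu
    obtain ⟨w, huw⟩ := (degree_pos_iff_exists_adj _ u).1 (by simpa using hu)
    simp only [deleteEdges_adj, edgesMeeting, coe_filter, Set.mem_ofPred_eq, not_and,
      not_exists] at huw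
    simpa using ⟨(G.degree_pos_iff_exists_adj u).2 ⟨w, huw.1⟩,
      fun hu => huw.2 (by simpa using huw.1) u hu (Sym2.mem_mk_left u w)⟩
  calc _ ≤ #(({v | 0 < G.degree v} : Finset V) \ S) + #S :=
        Nat.add_le_add_right (card_le_card hsub) _
    _ = #{v | 0 < G.degree v} := card_sdiff_add_card_eq_card hSsub

theorem two_mul_card_edgeFinset_le_mul_card_filter_degree_pos {ℓ : ℕ}
    (h : ¬ HasCopy (pathGraph ℓ) G) :
    2 * #G.edgeFinset ≤ (ℓ - 2) * #{v | 0 < G.degree v} := by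
  induction hk : #G.edgeFinset using Nat.strong_induction_on generalizing G with
  | _ k ih =>
  subst hk
  rcases G.edgeFinset.eq_empty_or_nonempty with he | hne
  · simp [he]
  obtain ⟨S, ⟨v, hv⟩, hSdeg, hS⟩ := exists_two_mul_card_edgesMeeting_le h hne
  classical
  have hedges := card_edgeFinset_deleteEdges_edgesMeeting (G := G) S
  have hvert := card_filter_degree_pos_deleteEdges_edgesMeeting_add_card_le hSdeg
  have hmeet := card_le_card (edgesMeeting_subset (G := G) S)
  have hpos : 0 < #(G.edgesMeeting S) := by
    obtain ⟨w, hvw⟩ := (G.degree_pos_iff_exists_adj v).1 (hSdeg v hv)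
    exact card_pos.2 ⟨s(v, w), by simpa [edgesMeeting] using ⟨hvw, v, hv, Or.inl rfl⟩⟩
  have ih' := ih _ (by omega) (G := G.deleteEdges (G.edgesMeeting S))
    (h ∘ HasCopy.mono (G.deleteEdges_le _)) rfl
  calc 2 * #G.edgeFinset
      = 2 * #(G.deleteEdges (G.edgesMeeting S)).edgeFinset + 2 * #(G.edgesMeeting S) := by
        omega
    _ ≤ (ℓ - 2) * #{v | 0 < (G.deleteEdges (G.edgesMeeting S)).degree v} + (ℓ - 2) * #S :=
        Nat.add_le_add ih' hS
    _ ≤ (ℓ - 2) * #{v | 0 < G.degree v} := by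
        rw [← Nat.mul_add]
        exact Nat.mul_le_mul_left _ hvert

end Counting

theorem two_mul_card_edgeFinset_le_of_not_hasCopy_pathGraph [Fintype V] [DecidableRel G.Adj]
    {ℓ : ℕ} (h : ¬ HasCopy (pathGraph ℓ) G) :
    2 * #G.edgeFinset ≤ (ℓ - 2) * Fintype.card V := by
  classical
  exact (two_mul_card_edgeFinset_le_mul_card_filter_degree_pos h).trans
    (Nat.mul_le_mul_left _ (card_le_univ _))

def blockCliques (m d : ℕ) : SimpleGraph (Fin m) where
  Adj x y := x ≠ y ∧ x.val / d = y.val / d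
  symm := ⟨fun _ _ h => ⟨h.1.symm, h.2.symm⟩⟩
  loopless := ⟨fun _ h => h.1 rfl⟩

instance (m d : ℕ) : DecidableRel (blockCliques m d).Adj :=
  fun x y => inferInstanceAs (Decidable (x ≠ y ∧ x.val / d = y.val / d))

theorem blockCliques_degree (m d : ℕ) (x : Fin m) :
    (blockCliques m d).degree x = #{y : Fin m | y.val / d = x.val / d} - 1 := by
  rw [← card_neighborFinset_eq_degree, ← card_erase_of_mem (by simp : x ∈ _)]
  congr 1
  ext y
  simp only [mem_neighborFinset, mem_erase, mem_filter, mem_univ, true_and]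
  exact ⟨fun h => ⟨h.1.symm, h.2.symm⟩, fun h => ⟨h.1.symm, h.2.symm⟩⟩

theorem two_mul_card_edgeFinset_blockCliques (m : ℕ) {d : ℕ} (hd : 0 < d) :
    2 * #(blockCliques m d).edgeFinset = m / d * (d * (d - 1)) + m % d * (m % d - 1) := by
  have hfiber : ∀ k, ∑ x : Fin m with x.val / d = k, (blockCliques m d).degree x =
      #{x : Fin m | x.val / d = k} * (#{x : Fin m | x.val / d = k} - 1) := by
    intro k
    rw [sum_congr rfl fun x hx => by rw [blockCliques_degree, (mem_filter.1 hx).2], sum_const,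
      smul_eq_mul]
  rw [← sum_degrees_eq_twice_card_edges,
    ← sum_fiberwise_of_maps_to (g := fun x : Fin m => x.val / d) (t := range (m / d + 1))
      (fun x _ => mem_range.2 (Nat.lt_succ_of_le (Nat.div_le_div_right x.isLt.le))),
    sum_congr rfl fun k _ => hfiber k, sum_range_succ,
    sum_congr rfl fun k hk => by rw [Fin.card_filter_val_div_eq_of_lt hd (mem_range.1 hk)],
    sum_const, card_range, smul_eq_mul, Fin.card_filter_val_div_eq_div m hd]

theorem not_hasCopy_pathGraph_blockCliques {m d ℓ : ℕ} (hd : 0 < d) (hdℓ : d < ℓ) :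
    ¬ HasCopy (pathGraph ℓ) (blockCliques m d) := by
  rintro ⟨f, hf⟩
  have hℓ : 0 < ℓ := hd.trans hdℓ
  have hblock : ∀ i : Fin ℓ, (f i).val / d = (f ⟨0, hℓ⟩).val / d := by
    rintro ⟨i, hi⟩
    induction i with
    | zero => rfl
    | succ i ih =>
      have hadj : (pathGraph ℓ).Adj ⟨i, by omega⟩ ⟨i + 1, hi⟩ :=
        pathGraph_adj.2 (Or.inl rfl)
      exact (f.map_rel hadj).2.symm.trans (ih _)
  have hcard := card_le_card_of_injOn (s := univ)
    (t := {x : Fin m | x.val / d = (f ⟨0, hℓ⟩).val / d}) f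
    (fun i _ => by simpa using hblock i) hf.injOn
  rw [card_univ, Fintype.card_fin, Fin.card_filter_val_div_eq hd] at hcard
  omega

end SimpleGraph

theorem le_exNum {W : Type*} {H : SimpleGraph W} {n : ℕ} {G : SimpleGraph (Fin n)}
    (hG : ¬ HasCopy H G) : G.edgeSet.ncard ≤ exNum n H :=
  le_csSup ⟨Nat.card (Sym2 (Fin n)), by rintro _ ⟨G, -, rfl⟩; exact Set.ncard_le_card _⟩
    ⟨G, hG, rfl⟩

theorem exNum_le {W : Type*} {H : SimpleGraph W} {n k : ℕ}
    (h : ∀ G : SimpleGraph (Fin n), ¬ HasCopy H G → G.edgeSet.ncard ≤ k) : exNum n H ≤ k :=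
  csSup_le' (by rintro _ ⟨G, hG, rfl⟩; exact h G hG)

theorem two_mul_exNum_pathGraph_le (ℓ n : ℕ) : 2 * exNum n (pathGraph ℓ) ≤ (ℓ - 2) * n := by
  classical
  have hle : exNum n (pathGraph ℓ) ≤ (ℓ - 2) * n / 2 := exNum_le fun G hG => by
    rw [Nat.le_div_iff_mul_le two_pos, ← coe_edgeFinset, Set.ncard_coe_finset, mul_comm]
    simpa using two_mul_card_edgeFinset_le_of_not_hasCopy_pathGraph hG
  calc 2 * exNum n (pathGraph ℓ) ≤ 2 * ((ℓ - 2) * n / 2) := Nat.mul_le_mul_left 2 hle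
    _ ≤ (ℓ - 2) * n := Nat.mul_div_le _ 2

theorem le_two_mul_exNum_pathGraph {ℓ : ℕ} (hℓ : 2 ≤ ℓ) (n : ℕ) :
    n / (ℓ - 1) * ((ℓ - 1) * (ℓ - 2)) + n % (ℓ - 1) * (n % (ℓ - 1) - 1) ≤
      2 * exNum n (pathGraph ℓ) := by
  have hd : 0 < ℓ - 1 := by omega
  have hcount := two_mul_card_edgeFinset_blockCliques n hd
  rw [show ℓ - 1 - 1 = ℓ - 2 by omega] at hcount
  rw [← hcount, ← Set.ncard_coe_finset, coe_edgeFinset]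
  exact Nat.mul_le_mul_left 2 (le_exNum (not_hasCopy_pathGraph_blockCliques hd (by omega)))

/-- With `n = d * q + b`, this is `4 * b * (d - b) ≤ d ^ 2`. -/
theorem Nat.four_mul_pred_mul_le {d q b : ℕ} (hb : b < d) :
    4 * ((d - 1) * (d * q + b)) ≤ 4 * (q * (d * (d - 1)) + b * (b - 1)) + d ^ 2 := by
  obtain ⟨e, rfl⟩ : ∃ e, d = e + 1 := ⟨d - 1, by omega⟩
  rcases b with _ | b
  · simp only [Nat.add_sub_cancel]; nlinarith
  · simp only [Nat.add_sub_cancel]; nlinarith [sq_nonneg ((e : ℤ) - 1 - 2 * b)]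

theorem four_mul_le_eight_mul_exNum_pathGraph_add {ℓ : ℕ} (hℓ : 2 ≤ ℓ) (n : ℕ) :
    4 * ((ℓ - 2) * n) ≤ 8 * exNum n (pathGraph ℓ) + (ℓ - 1) ^ 2 := by
  have hlower := le_two_mul_exNum_pathGraph hℓ n
  have harith :=
    Nat.four_mul_pred_mul_le (q := n / (ℓ - 1)) (Nat.mod_lt n (by omega : 0 < ℓ - 1))
  rw [Nat.div_add_mod, show ℓ - 1 - 1 = ℓ - 2 by omega] at harith
  omega

/-- For `ℓ ≥ 4` and nonnegative integers `n₁, n₂, c` with `c ≤ n₁`,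
`ex(n₁, P_ℓ) + ex(n₂, P_ℓ) < ex(n₁ - c, P_ℓ) + ex(n₂ + c + ℓ, P_ℓ)`. -/
theorem ex_path_shift_lt (ℓ n₁ n₂ c : ℕ) (hℓ : 4 ≤ ℓ) (hc : c ≤ n₁) :
    exNum n₁ (pathGraph ℓ) + exNum n₂ (pathGraph ℓ) <
      exNum (n₁ - c) (pathGraph ℓ) + exNum (n₂ + c + ℓ) (pathGraph ℓ) := by
  have upper₁ := two_mul_exNum_pathGraph_le ℓ n₁
  have upper₂ := two_mul_exNum_pathGraph_le ℓ n₂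
  have lower₁ := four_mul_le_eight_mul_exNum_pathGraph_add (by omega : 2 ≤ ℓ) (n₁ - c)
  have lower₂ := four_mul_le_eight_mul_exNum_pathGraph_add (by omega : 2 ≤ ℓ) (n₂ + c + ℓ)
  obtain ⟨k, rfl⟩ := Nat.exists_eq_add_of_le hℓ
  obtain ⟨m, rfl⟩ := Nat.exists_eq_add_of_le hc
  simp only [show 4 + k - 2 = k + 2 by omega, show 4 + k - 1 = k + 3 by omega,
    Nat.add_sub_cancel_left] at upper₁ upper₂ lower₁ lower₂ ⊢
  nlinarith
end

section
/- Let H be a bipartite graph containing a tail, let c be a red-blue coloring of the edges of K_n, and let K be a blue clique in K_n of maximum size, with |V(K)| ≥ |V(H)|. Let Y be the set of vertices of K_n outside K that have at least one blue neighbor in V(K), and let X = V(K_n) \ (V(K) ∪ Y). Then every blue edge of K_n that does not have both endpoints in X is contained in a blue copy of H; consequently, every blue NIM-H edge has both endpoints in X. -/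
open SimpleGraph

/-- `H` has a tail: a path `v₀ v₁ v₂` such that `v₂` is adjacent only to `v₁` and
`v₁` is adjacent only to `v₀` and `v₂`. -/
def HasTail {W : Type*} (H : SimpleGraph W) : Prop :=
  ∃ v₀ v₁ v₂ : W, H.Adj v₀ v₁ ∧ H.Adj v₁ v₂ ∧ v₀ ≠ v₂ ∧
    (∀ w, H.Adj v₂ w → w = v₁) ∧ (∀ w, H.Adj v₁ w → w = v₀ ∨ w = v₂)

/-! The tail `v₀ v₁ v₂` of `H` is placed on `u a b`, where `ab` is the blue edge and `u ∈ K` is a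
blue neighbour of `a` other than `b`; the other vertices of `H` go into `K`, which has room since
`|K| ≥ |V(H)|`. Edges of `H` off the tail then join two vertices of the blue clique `K`. Every
vertex outside `X` lies in `K` or has a blue neighbour in `K`, and if `a ∈ K` (or the neighbour
is `b` itself) any third vertex of `K` serves as `u`. -/

theorem Function.Embedding.setValue_mem_of_ne {α β : Type*} [DecidableEq α] [DecidableEq β]
    (f : α ↪ β) {a c : α} (b : β) {s : Set β} (hc : c ≠ a) (ha : f a ∈ s) (hcs : f c ∈ s) :
    f.setValue a b c ∈ s := by
  simp only [Function.Embedding.setValue, Function.Embedding.coeFn_mk, if_neg hc]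
  split_ifs <;> assumption

-- Adjusting an embedding into `K` by `setValue` only swaps values, so at each step the points
-- not yet reassigned keep values in `K`.
theorem Finset.exists_embedding_of_card_le {V W : Type*} [Fintype W] [DecidableEq W]
    [DecidableEq V] {K : Finset V} (hW : Fintype.card W ≤ K.card) {v₀ v₁ v₂ : W}
    (h01 : v₀ ≠ v₁) (h02 : v₀ ≠ v₂) (h12 : v₁ ≠ v₂) {u a b : V} (hu : u ∈ K) (hua : u ≠ a) (hub : u ≠ b) (hab : a ≠ b) :
    ∃ f : W ↪ V, f v₀ = u ∧ f v₁ = a ∧ f v₂ = b ∧ ∀ w, w ≠ v₁ → w ≠ v₂ → f w ∈ K := by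
  obtain ⟨g⟩ : Nonempty (W ↪ K) := Function.Embedding.nonempty_of_card_le (by simpa using hW)
  let f₀ := g.trans (Function.Embedding.subtype (· ∈ K))
  have hf₀ (w : W) : f₀ w ∈ K := (g w).2
  let f₁ := f₀.setValue v₀ u
  have hf₁ (w : W) : f₁ w ∈ K := by
    by_cases hw : w = v₀
    · simpa [f₁, hw] using hu
    · exact f₀.setValue_mem_of_ne u (s := K) hw (hf₀ _) (hf₀ _)
  let f₂ := f₁.setValue v₁ a
  have hf₂ (w : W) (hw : w ≠ v₁) : f₂ w ∈ K :=
    f₁.setValue_mem_of_ne a (s := K) hw (hf₁ _) (hf₁ _)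
  have hf₂₀ : f₂ v₀ = u := by
    rw [Function.Embedding.setValue_eq_of_ne h01 (by simpa [f₁] using hua)]
    simp [f₁]
  have hf₂₁ : f₂ v₁ = a := by simp [f₂]
  refine ⟨f₂.setValue v₂ b, ?_, ?_, by simp, fun w hw₁ hw₂ => ?_⟩
  · rwa [Function.Embedding.setValue_eq_of_ne h02 (by rwa [hf₂₀])]
  · rwa [Function.Embedding.setValue_eq_of_ne h12 (by rwa [hf₂₁])]
  · exact f₂.setValue_mem_of_ne b (s := K) hw₂ (hf₂ _ h12.symm) (hf₂ _ hw₁)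

namespace SimpleGraph

variable {V W : Type*} {G : SimpleGraph V} {H : SimpleGraph W}

theorem adj_map_of_tail {K : Finset V} (hK : G.IsClique K) {f : W → V}
    (hf : Function.Injective f) {v₀ v₁ v₂ : W} (hv₂ : ∀ w, H.Adj v₂ w → w = v₁)
    (hv₁ : ∀ w, H.Adj v₁ w → w = v₀ ∨ w = v₂) (h01 : G.Adj (f v₀) (f v₁))
    (h12 : G.Adj (f v₁) (f v₂)) (hfK : ∀ w, w ≠ v₁ → w ≠ v₂ → f w ∈ K) {x y : W}
    (hxy : H.Adj x y) : G.Adj (f x) (f y) := by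
  have of_mem_tail {x y : W} (hxy : H.Adj x y) (hx : x = v₁ ∨ x = v₂) : G.Adj (f x) (f y) := by
    rcases hx with rfl | rfl
    · rcases hv₁ y hxy with rfl | rfl
      exacts [h01.symm, h12]
    · rw [hv₂ y hxy]
      exact h12.symm
  by_cases hx : x = v₁ ∨ x = v₂
  · exact of_mem_tail hxy hx
  by_cases hy : y = v₁ ∨ y = v₂
  · exact (of_mem_tail hxy.symm hy).symm
  simp only [not_or] at hx hy
  exact hK (hfK x hx.1 hx.2) (hfK y hy.1 hy.2) (hf.ne hxy.ne)

theorem edgeInCopy_of_adj_of_adj_mem_clique [Fintype W] (hH : HasTail H) {K : Finset V}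
    (hK : G.IsClique K) (hW : Fintype.card W ≤ K.card) {a b u : V} (hab : G.Adj a b)
    (hau : G.Adj a u) (hu : u ∈ K) (hub : u ≠ b) : EdgeInCopy H G s(a, b) := by
  classical
  obtain ⟨v₀, v₁, v₂, h01, h12, h02, hv₂, hv₁⟩ := hH
  obtain ⟨f, hf₀, hf₁, hf₂, hfK⟩ :=
    K.exists_embedding_of_card_le hW h01.ne h02 h12.ne hu hau.ne.symm hub hab.ne
  refine ⟨⟨f, adj_map_of_tail hK f.injective hv₂ hv₁ ?_ ?_ hfK⟩, f.injective, s(v₁, v₂), h12,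
    ?_⟩
  · rw [hf₀, hf₁]; exact hau.symm
  · rw [hf₁, hf₂]; exact hab
  · simp [hf₁, hf₂]

theorem three_le_card_of_hasTail [Fintype W] (hH : HasTail H) : 3 ≤ Fintype.card W := by
  classical
  obtain ⟨v₀, v₁, v₂, h01, h12, h02, -⟩ := hH
  calc 3 = ({v₀, v₁, v₂} : Finset W).card :=
      (Finset.card_eq_three.2 ⟨_, _, _, h01.ne, h02, h12.ne, rfl⟩).symm
    _ ≤ Fintype.card W := Finset.card_le_univ _

theorem edgeInCopy_of_adj_of_mem_clique [Fintype W] (hH : HasTail H) {K : Finset V}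
    (hK : G.IsClique K) (hW : Fintype.card W ≤ K.card) {a b : V} (hab : G.Adj a b)
    (ha : a ∈ K) : EdgeInCopy H G s(a, b) := by
  classical
  obtain ⟨u, hu⟩ : ((K.erase a).erase b).Nonempty := by
    have := three_le_card_of_hasTail hH
    have := Finset.pred_card_le_card_erase (s := K) (a := a)
    have := Finset.pred_card_le_card_erase (s := K.erase a) (a := b)
    rw [← Finset.card_pos]
    omega
  obtain ⟨hub, hua, huK⟩ : u ≠ b ∧ u ≠ a ∧ u ∈ K := by simpa using hu
  exact edgeInCopy_of_adj_of_adj_mem_clique hH hK hW hab (hK ha huK hua.symm) huK hub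

theorem edgeInCopy_of_adj_of_mem_or_adj_clique [Fintype W] (hH : HasTail H) {K : Finset V}
    (hK : G.IsClique K) (hW : Fintype.card W ≤ K.card) {a b : V} (hab : G.Adj a b)
    (ha : a ∈ K ∨ ∃ u ∈ K, G.Adj a u) : EdgeInCopy H G s(a, b) := by
  rcases ha with ha | ⟨u, hu, hau⟩
  · exact edgeInCopy_of_adj_of_mem_clique hH hK hW hab ha
  obtain rfl | hub := eq_or_ne u b
  · rw [Sym2.eq_swap]
    exact edgeInCopy_of_adj_of_mem_clique hH hK hW hab.symm hu
  · exact edgeInCopy_of_adj_of_adj_mem_clique hH hK hW hab hau hu hub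

end SimpleGraph

theorem blue_nonX_edge_in_blue_copy_general {W : Type*} [Fintype W] (H : SimpleGraph W)
    (htail : HasTail H)
    (n : ℕ) (c : Sym2 (Fin n) → Bool)
    (K : Finset (Fin n)) (hK : (colorGraph c true).IsClique ↑K)
    (hKbig : Fintype.card W ≤ K.card)
    (Y : Set (Fin n)) (hY : Y = {v | v ∉ K ∧ ∃ u ∈ K, (colorGraph c true).Adj v u})
    (X : Set (Fin n)) (hX : X = {v | v ∉ K ∧ v ∉ Y}) :
    ∀ e ∈ (colorGraph c true).edgeSet, ¬ (∀ v ∈ e, v ∈ X) →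
      EdgeInCopy H (colorGraph c true) e := by
  have of_notMem_X {a b : Fin n} (hab : (colorGraph c true).Adj a b) (ha : a ∉ X) :
      EdgeInCopy H (colorGraph c true) s(a, b) := by
    refine edgeInCopy_of_adj_of_mem_or_adj_clique htail hK hKbig hab ?_
    subst hX hY
    by_contra! h
    exact ha ⟨h.1, fun ⟨_, u, hu, hau⟩ => h.2 u hu hau⟩
  intro e he hnX
  induction e using Sym2.ind with
  | _ a b =>
    simp only [Sym2.mem_iff, forall_eq_or_imp, forall_eq, not_and_or] at hnX
    rcases hnX with ha | hb
    · exact of_notMem_X he ha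
    · rw [Sym2.eq_swap]
      exact of_notMem_X he.symm hb

/-- Let `H` be a bipartite graph containing a tail, `c` a red-blue coloring of the
edges of `K_n` (`true` = blue, `false` = red), and `K` a blue clique of maximum size
with `|K| ≥ |V(H)|`. Let `Y` be the vertices outside `K` with a blue neighbor in `K`,
and `X` the remaining vertices. Then every blue edge that does not have both endpoints
in `X` is contained in a blue copy of `H`. -/
theorem blue_nonX_edge_in_blue_copy {W : Type*} [Fintype W] (H : SimpleGraph W)
    (hbip : H.Colorable 2) (htail : HasTail H)
    (n : ℕ) (c : Sym2 (Fin n) → Bool)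
    (K : Finset (Fin n)) (hK : (colorGraph c true).IsClique ↑K)
    (hKmax : ∀ K' : Finset (Fin n), (colorGraph c true).IsClique ↑K' → K'.card ≤ K.card)
    (hKbig : Fintype.card W ≤ K.card)
    (Y : Set (Fin n)) (hY : Y = {v | v ∉ K ∧ ∃ u ∈ K, (colorGraph c true).Adj v u})
    (X : Set (Fin n)) (hX : X = {v | v ∉ K ∧ v ∉ Y}) :
    ∀ e ∈ (colorGraph c true).edgeSet, ¬ (∀ v ∈ e, v ∈ X) →
      EdgeInCopy H (colorGraph c true) e :=
  blue_nonX_edge_in_blue_copy_general H htail n c K hK hKbig Y hY X hX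
end

section
/- Let H be a bipartite graph with bipartition (A,B) containing a tail, such that for every connected component C of H the set V(C) ∩ A is no larger than V(C) ∩ B, and set a = |A|. Let c be a red-blue coloring of the edges of K_n, and let K be a blue clique in K_n of maximum size, with |V(K)| ≥ |V(H)|. Let Y be the set of vertices of K_n outside K that have at least one blue neighbor in V(K), and let X = V(K_n) \ (V(K) ∪ Y). If |X| ≥ a, then every red edge of K_n with one endpoint in X and the other endpoint in V(K) ∪ Y is contained in a red copy of H. -/
open SimpleGraph

/-!
Every edge between `X` and `K` is red, since a vertex of `X` with a blue neighbour in `K` would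
lie in `Y`. So `X ∪ K` carries a red complete bipartite graph whose sides can hold `A` and `B`,
and a copy of `H` through a prescribed edge `xy` with `y ∈ K` is obtained by sending `A` into `X`
and `B` into `K`. If `y ∈ Y`, maximality of `K` gives `y` a red neighbour `k ∈ K`, and the tail
`v₀ v₁ v₂` lets `y` replace a vertex of degree at most two: if `v₁ ∈ A`, put `v₁` at `x` and the
leaf `v₂` at `y`; otherwise put `v₀` at `x`, `v₁` at `y` and move the leaf `v₂` to `k`.
-/

open Function Set

lemma exists_mapsTo_injOn_eq {α β : Type*} [Finite α] {s : Set α} {t : Set β}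
    (h : s.ncard ≤ t.ncard) {a : α} {b : β} (ha : a ∈ s) (hb : b ∈ t) :
    ∃ f : α → β, MapsTo f s t ∧ InjOn f s ∧ f a = b := by
  classical
  have : Nonempty β := ⟨b⟩
  have ht : t.Finite := finite_of_ncard_pos ((ncard_pos (toFinite s)).2 ⟨a, ha⟩ |>.trans_le h)
  obtain ⟨g, hgt, hg⟩ := (toFinite s).exists_injOn_of_encard_le (t := t)
    (by rwa [← (toFinite s).cast_ncard_eq, ← ht.cast_ncard_eq, Nat.cast_le])
  refine ⟨Equiv.swap (g a) b ∘ g, fun w hw => ?_, (Equiv.injective _).comp_injOn hg, by simp⟩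
  by_cases hwa : g w = g a
  · simpa [hwa] using hb
  by_cases hwb : g w = b
  · simpa [hwb] using hgt ha
  simpa [Equiv.swap_apply_of_ne_of_ne hwa hwb] using hgt hw

lemma exists_injective_mapsTo_mapsTo_compl {α β : Type*} [Finite α] {s : Set α}
    {X Y : Set β} (hXY : Disjoint X Y) (hsX : s.ncard ≤ X.ncard) (hsY : sᶜ.ncard ≤ Y.ncard)
    {a b : α} {x y : β} (ha : a ∈ s) (hb : b ∉ s) (hx : x ∈ X) (hy : y ∈ Y) :
    ∃ f : α → β, Injective f ∧ MapsTo f s X ∧ MapsTo f sᶜ Y ∧ f a = x ∧ f b = y := by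
  classical
  obtain ⟨f₁, hf₁X, hf₁, rfl⟩ := exists_mapsTo_injOn_eq hsX ha hx
  obtain ⟨f₂, hf₂Y, hf₂, rfl⟩ := exists_mapsTo_injOn_eq hsY (mem_compl hb) hy
  refine ⟨s.piecewise f₁ f₂, (injective_piecewise_iff s).2 ⟨hf₁, hf₂, ?_⟩, ?_, ?_,
    by simp [ha], by simp [hb]⟩
  · exact fun u hu v hv => hXY.ne_of_mem (hf₁X hu) (hf₂Y hv)
  · exact fun u hu => by simpa [hu] using hf₁X hu
  · exact fun u hu => by simpa [notMem_of_mem_compl hu] using hf₂Y hu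

section Embedding

variable {W V : Type*} {H : SimpleGraph W} {G : SimpleGraph V}

lemma adj_of_mapsTo_of_mapsTo_compl {s : Set W} {X Y : Set V}
    (hXY : ∀ p ∈ X, ∀ q ∈ Y, G.Adj p q) {f : W → V} (hfX : MapsTo f s X)
    (hfY : MapsTo f sᶜ Y) {u v : W} (huv : u ∈ s ↔ v ∉ s) : G.Adj (f u) (f v) := by
  by_cases hu : u ∈ s
  · exact hXY _ (hfX hu) _ (hfY (huv.1 hu))
  · exact (hXY _ (hfX (not_not.1 (mt huv.2 hu))) _ (hfY hu)).symm

lemma injective_update_of_notMem_range [DecidableEq W] {f : W → V} (hf : Injective f)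
    (w : W) {y : V} (hy : y ∉ range f) : Injective (update f w y) := by
  intro u v huv
  by_cases hu : u = w <;> by_cases hv : v = w
  · exact hu.trans hv.symm
  · simp only [hu, update_self, update_of_ne hv] at huv
    exact absurd ⟨v, huv.symm⟩ hy
  · simp only [hv, update_self, update_of_ne hu] at huv
    exact absurd ⟨u, huv⟩ hy
  · simpa only [update_of_ne hu, update_of_ne hv, hf.eq_iff] using huv

lemma adj_update [DecidableEq W] {f : W → V} {w : W} {y : V}
    (hf : ∀ u v, H.Adj u v → u ≠ w → v ≠ w → G.Adj (f u) (f v))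
    (hy : ∀ u, H.Adj w u → G.Adj y (f u)) {u v : W} (huv : H.Adj u v) :
    G.Adj (update f w y u) (update f w y v) := by
  by_cases hu : u = w
  · subst hu
    simpa [update_of_ne huv.ne.symm] using hy v huv
  by_cases hv : v = w
  · subst hv
    simpa [update_of_ne huv.ne] using (hy u huv.symm).symm
  simpa [update_of_ne hu, update_of_ne hv] using hf u v huv hu hv

lemma notMem_range_of_mapsTo_of_mapsTo_compl {A : Set W} {X K : Set V} {f : W → V}
    (hfX : MapsTo f A X) (hfK : MapsTo f Aᶜ K) {y : V} (hy : y ∉ X ∪ K) : y ∉ range f := by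
  rintro ⟨u, rfl⟩
  by_cases hu : u ∈ A
  · exact hy (Or.inl (hfX hu))
  · exact hy (Or.inr (hfK hu))

lemma edgeInCopy_of_injective {f : W → V} (hf : Injective f)
    (hadj : ∀ u v, H.Adj u v → G.Adj (f u) (f v)) {a b : W} (hab : H.Adj a b) :
    EdgeInCopy H G s(f a, f b) :=
  ⟨⟨f, hadj _ _⟩, hf, s(a, b), hab, rfl⟩

end Embedding

section CompleteBipartiteHost

variable {W V : Type*} [Finite W] {H : SimpleGraph W} {G : SimpleGraph V} {A : Set W}
  {X K : Set V}

lemma edgeInCopy_of_mem_of_mem (hbip : ∀ u v, H.Adj u v → (u ∈ A ↔ v ∉ A))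
    (hXK : Disjoint X K) (hred : ∀ p ∈ X, ∀ q ∈ K, G.Adj p q) (hAX : A.ncard ≤ X.ncard)
    (hWK : Nat.card W ≤ K.ncard) {a b : W} (hab : H.Adj a b) {x y : V} (hx : x ∈ X)
    (hy : y ∈ K) : EdgeInCopy H G s(x, y) := by
  wlog ha : a ∈ A generalizing a b
  · exact this hab.symm ((hbip b a hab.symm).2 ha)
  obtain ⟨f, hf, hfX, hfK, rfl, rfl⟩ := exists_injective_mapsTo_mapsTo_compl hXK hAX
    ((ncard_le_card _).trans hWK) ha ((hbip a b hab).1 ha) hx hy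
  exact edgeInCopy_of_injective hf
    (fun u v huv => adj_of_mapsTo_of_mapsTo_compl hred hfX hfK (hbip u v huv)) hab

lemma edgeInCopy_of_pendant (hbip : ∀ u v, H.Adj u v → (u ∈ A ↔ v ∉ A))
    (hXK : Disjoint X K) (hred : ∀ p ∈ X, ∀ q ∈ K, G.Adj p q) (hAX : A.ncard ≤ X.ncard)
    (hWK : Nat.card W ≤ K.ncard) {v₁ v₂ : W} (h12 : H.Adj v₁ v₂)
    (hleaf : ∀ w, H.Adj v₂ w → w = v₁) (hv₁ : v₁ ∈ A) {x y k : V} (hx : x ∈ X) (hk : k ∈ K)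
    (hy : y ∉ X ∪ K) (hxy : G.Adj x y) : EdgeInCopy H G s(x, y) := by
  classical
  obtain ⟨f, hf, hfX, hfK, hfv₁, -⟩ := exists_injective_mapsTo_mapsTo_compl hXK hAX
    ((ncard_le_card _).trans hWK) hv₁ ((hbip v₁ v₂ h12).1 hv₁) hx hk
  have hadj : ∀ u v, H.Adj u v → G.Adj (update f v₂ y u) (update f v₂ y v) := by
    refine fun u v huv => adj_update
      (fun u v huv _ _ => adj_of_mapsTo_of_mapsTo_compl hred hfX hfK (hbip u v huv))
      (fun u hu => ?_) huv
    rw [hleaf u hu, hfv₁]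
    exact hxy.symm
  simpa [update_of_ne h12.ne, hfv₁] using edgeInCopy_of_injective
    (injective_update_of_notMem_range hf v₂ (notMem_range_of_mapsTo_of_mapsTo_compl hfX hfK hy))
    hadj h12

lemma edgeInCopy_of_tail_center (hbip : ∀ u v, H.Adj u v → (u ∈ A ↔ v ∉ A))
    (hXK : Disjoint X K) (hred : ∀ p ∈ X, ∀ q ∈ K, G.Adj p q) (hAX : A.ncard ≤ X.ncard)
    (hWK : Nat.card W ≤ K.ncard) {v₀ v₁ v₂ : W} (h01 : H.Adj v₀ v₁) (h02 : v₀ ≠ v₂)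
    (hleaf : ∀ w, H.Adj v₂ w → w = v₁) (hdeg : ∀ w, H.Adj v₁ w → w = v₀ ∨ w = v₂)
    (hv₁ : v₁ ∉ A) {x y k : V} (hx : x ∈ X) (hk : k ∈ K) (hy : y ∉ X ∪ K) (hxy : G.Adj x y)
    (hyk : G.Adj y k) : EdgeInCopy H G s(x, y) := by
  classical
  have hv₀ : v₀ ∈ A \ {v₂} := ⟨(hbip v₀ v₁ h01).2 hv₁, h02⟩
  obtain ⟨f, hf, hfX, hfK, hfv₀, hfv₂⟩ := exists_injective_mapsTo_mapsTo_compl hXK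
    ((ncard_le_ncard sdiff_subset).trans hAX) ((ncard_le_card _).trans hWK) hv₀
    (fun h => h.2 rfl) hx hk
  -- moving the leaf `v₂` to the side of `v₁` breaks only the edge `v₁ v₂`
  have hoff : ∀ u v, H.Adj u v → u ≠ v₁ → v ≠ v₁ → G.Adj (f u) (f v) := by
    refine fun u v huv hu hv => adj_of_mapsTo_of_mapsTo_compl hred hfX hfK ?_
    have hu₂ : u ≠ v₂ := fun h => hv (hleaf v (h ▸ huv))
    have hv₂ : v ≠ v₂ := fun h => hu (hleaf u (h ▸ huv.symm))
    simpa [hu₂, hv₂] using hbip u v huv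
  have hadj : ∀ u v, H.Adj u v → G.Adj (update f v₁ y u) (update f v₁ y v) := by
    refine fun u v huv => adj_update hoff (fun u hu => ?_) huv
    rcases hdeg u hu with rfl | rfl
    · exact hfv₀ ▸ hxy.symm
    · exact hfv₂ ▸ hyk
  simpa [update_of_ne h01.ne, hfv₀] using edgeInCopy_of_injective
    (injective_update_of_notMem_range hf v₁ (notMem_range_of_mapsTo_of_mapsTo_compl hfX hfK hy))
    hadj h01

lemma edgeInCopy_of_hasTail (hbip : ∀ u v, H.Adj u v → (u ∈ A ↔ v ∉ A))
    (hXK : Disjoint X K) (hred : ∀ p ∈ X, ∀ q ∈ K, G.Adj p q) (hAX : A.ncard ≤ X.ncard)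
    (hWK : Nat.card W ≤ K.ncard) (htail : HasTail H) {x y k : V} (hx : x ∈ X) (hk : k ∈ K)
    (hy : y ∉ X ∪ K) (hxy : G.Adj x y) (hyk : G.Adj y k) : EdgeInCopy H G s(x, y) := by
  obtain ⟨v₀, v₁, v₂, h01, h12, h02, hleaf, hdeg⟩ := htail
  by_cases hv₁ : v₁ ∈ A
  · exact edgeInCopy_of_pendant hbip hXK hred hAX hWK h12 hleaf hv₁ hx hk hy hxy
  · exact edgeInCopy_of_tail_center hbip hXK hred hAX hWK h01 h02 hleaf hdeg hv₁ hx hk hy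
      hxy hyk

end CompleteBipartiteHost

lemma SimpleGraph.exists_not_adj_of_isClique_of_card_le {V : Type*} [DecidableEq V]
    {G : SimpleGraph V} {K : Finset V} (hK : G.IsClique ↑K)
    (hKmax : ∀ K' : Finset V, G.IsClique ↑K' → K'.card ≤ K.card) {v : V} (hv : v ∉ K) :
    ∃ u ∈ K, ¬ G.Adj v u := by
  by_contra! hadj
  have hclique : G.IsClique ↑(insert v K) := by
    rw [Finset.coe_insert]
    exact hK.insert fun u hu _ => hadj u hu
  have := hKmax _ hclique
  rw [Finset.card_insert_of_notMem hv] at this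
  omega

lemma colorGraph_false_adj_of_not_adj_true {n : ℕ} {c : Sym2 (Fin n) → Bool} {x y : Fin n}
    (hxy : x ≠ y) (h : ¬ (colorGraph c true).Adj x y) : (colorGraph c false).Adj x y :=
  ⟨hxy, by simpa [colorGraph, hxy] using h⟩

theorem red_X_edge_in_red_copy_general {W : Type*} [Fintype W] (H : SimpleGraph W)
    (A B : Set W) (hpart : ∀ w, w ∈ A ↔ w ∉ B)
    (hbip : ∀ u v, H.Adj u v → ¬ (u ∈ A ∧ v ∈ A) ∧ ¬ (u ∈ B ∧ v ∈ B))
    (htail : HasTail H)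
    (n : ℕ) (c : Sym2 (Fin n) → Bool)
    (K : Finset (Fin n)) (hK : (colorGraph c true).IsClique ↑K)
    (hKmax : ∀ K' : Finset (Fin n), (colorGraph c true).IsClique ↑K' → K'.card ≤ K.card)
    (hKbig : Fintype.card W ≤ K.card)
    (Y : Set (Fin n)) (hY : Y = {v | v ∉ K ∧ ∃ u ∈ K, (colorGraph c true).Adj v u})
    (X : Set (Fin n)) (hX : X = {v | v ∉ K ∧ v ∉ Y})
    (hXa : A.ncard ≤ X.ncard) :
    ∀ e ∈ (colorGraph c false).edgeSet,
      (∃ x y : Fin n, e = s(x, y) ∧ x ∈ X ∧ y ∈ ↑K ∪ Y) →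
      EdgeInCopy H (colorGraph c false) e := by
  have hcross : ∀ u v, H.Adj u v → (u ∈ A ↔ v ∉ A) := fun u v huv => by
    have := hbip u v huv; have := hpart u; have := hpart v; tauto
  have hXK : Disjoint X ↑K := by
    subst hX
    exact Set.disjoint_left.2 fun p hp => hp.1
  have hred : ∀ p ∈ X, ∀ q ∈ (K : Set (Fin n)), (colorGraph c false).Adj p q := by
    subst hX
    exact fun p hp q hq => colorGraph_false_adj_of_not_adj_true (fun h => hp.1 (h ▸ hq))
      fun h => hp.2 (hY ▸ ⟨hp.1, q, hq, h⟩)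
  have hWK : Nat.card W ≤ (K : Set (Fin n)).ncard := by simpa using hKbig
  rintro _ hxy ⟨x, y, rfl, hx, hy | hy⟩
  · obtain ⟨v₀, v₁, -, h01, -⟩ := htail
    exact edgeInCopy_of_mem_of_mem hcross hXK hred hXa hWK h01 hx hy
  · have hyK : y ∉ K := (hY ▸ hy).1
    have hyX : y ∉ X := fun h => (hX ▸ h).2 hy
    obtain ⟨k, hk, hyk⟩ := exists_not_adj_of_isClique_of_card_le hK hKmax hyK
    exact edgeInCopy_of_hasTail hcross hXK hred hXa hWK htail hx hk (by simp [hyX, hyK]) hxy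
      (colorGraph_false_adj_of_not_adj_true (fun h => hyK (h ▸ hk)) hyk)

/-- Let `H` be a bipartite graph with bipartition `(A, B)` containing a tail, with every
connected component having at most as many vertices in `A` as in `B`, and set `a = |A|`.
Let `c` be a red-blue coloring of the edges of `K_n` (`true` = blue, `false` = red) and
`K` a blue clique of maximum size with `|K| ≥ |V(H)|`. Let `Y` be the vertices outside
`K` with a blue neighbor in `K`, and `X` the remaining vertices. If `|X| ≥ a`, then
every red edge with one endpoint in `X` and the other in `K ∪ Y` is contained in a red
copy of `H`. -/
theorem red_X_edge_in_red_copy {W : Type*} [Fintype W] (H : SimpleGraph W)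
    (A B : Set W) (hpart : ∀ w, w ∈ A ↔ w ∉ B)
    (hbip : ∀ u v, H.Adj u v → ¬ (u ∈ A ∧ v ∈ A) ∧ ¬ (u ∈ B ∧ v ∈ B))
    (hcomp : ∀ C : H.ConnectedComponent, (C.supp ∩ A).ncard ≤ (C.supp ∩ B).ncard)
    (htail : HasTail H)
    (n : ℕ) (c : Sym2 (Fin n) → Bool)
    (K : Finset (Fin n)) (hK : (colorGraph c true).IsClique ↑K)
    (hKmax : ∀ K' : Finset (Fin n), (colorGraph c true).IsClique ↑K' → K'.card ≤ K.card)
    (hKbig : Fintype.card W ≤ K.card)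
    (Y : Set (Fin n)) (hY : Y = {v | v ∉ K ∧ ∃ u ∈ K, (colorGraph c true).Adj v u})
    (X : Set (Fin n)) (hX : X = {v | v ∉ K ∧ v ∉ Y})
    (hXa : A.ncard ≤ X.ncard) :
    ∀ e ∈ (colorGraph c false).edgeSet,
      (∃ x y : Fin n, e = s(x, y) ∧ x ∈ X ∧ y ∈ ↑K ∪ Y) →
      EdgeInCopy H (colorGraph c false) e :=
  red_X_edge_in_red_copy_general H A B hpart hbip htail n c K hK hKmax hKbig Y hY X hX hXa
end
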